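/- Let A, B, C : ℝ → ℝ be functions with A constant (A' = 0) and B, C twice differentiable satisfying B' = -2B and C' = 2C. Define P := -2A + B - C. Then P is three times differentiable with P''' = 4 P', and moreover A = (1/8) P'' - (1/2) P, B = (1/8) P'' - (1/4) P', and C = -(1/8) P'' - (1/4) P'. -/

import Mathlib

/-!
`B` and `C` are eigenfunctions of `d/dt` with eigenvalues `-2` and `2`, and `A` is killed by it, so
every derivative of `P = -2A + B - C` is a combination of `B` and `C`:
`P' = -2B - 2C`, `P'' = 4B - 4C`, `P''' = -8B - 8C = 4P'`. Solving these relations for `A`, `B`, `C`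
gives the representation.
-/

section EigenCombination

variable {𝕜 : Type*} [NontriviallyNormedField 𝕜] {B C : 𝕜 → 𝕜} {k m : 𝕜}

theorem hasDerivAt_combination_of_eigen (hB : ∀ t, HasDerivAt B (k * B t) t)
    (hC : ∀ t, HasDerivAt C (m * C t) t) (a b t : 𝕜) :
    HasDerivAt (fun s => a * B s + b * C s) (a * k * B t + b * m * C t) t :=
  (((hB t).const_mul a).add ((hC t).const_mul b)).congr_deriv (by ring)

theorem differentiable_combination_of_eigen (hB : ∀ t, HasDerivAt B (k * B t) t)
    (hC : ∀ t, HasDerivAt C (m * C t) t) (a b : 𝕜) :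
    Differentiable 𝕜 (fun s => a * B s + b * C s) :=
  fun t => (hasDerivAt_combination_of_eigen hB hC a b t).differentiableAt

theorem deriv_combination_of_eigen (hB : ∀ t, HasDerivAt B (k * B t) t)
    (hC : ∀ t, HasDerivAt C (m * C t) t) (a b : 𝕜) :
    deriv (fun s => a * B s + b * C s) = fun s => a * k * B s + b * m * C s :=
  funext fun t => (hasDerivAt_combination_of_eigen hB hC a b t).deriv

end EigenCombination

theorem P_representation (A B C : ℝ → ℝ)
    (hA : ∀ t, HasDerivAt A 0 t)
    (hB : ∀ t, HasDerivAt B (-2 * B t) t)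
    (hC : ∀ t, HasDerivAt C (2 * C t) t) :
    let P : ℝ → ℝ := fun t => -2 * A t + B t - C t
    Differentiable ℝ P ∧ Differentiable ℝ (deriv P) ∧
      Differentiable ℝ (deriv (deriv P)) ∧
      (∀ t, deriv (deriv (deriv P)) t = 4 * deriv P t) ∧
      (∀ t, A t = 1 / 8 * deriv (deriv P) t - 1 / 2 * P t) ∧
      (∀ t, B t = 1 / 8 * deriv (deriv P) t - 1 / 4 * deriv P t) ∧
      (∀ t, C t = -(1 / 8) * deriv (deriv P) t - 1 / 4 * deriv P t) := by
  intro P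
  have hP : ∀ t, HasDerivAt P (-2 * B t + -2 * C t) t := fun t =>
    ((((hA t).const_mul (-2)).add (hB t)).sub (hC t)).congr_deriv (by ring)
  have d1 : deriv P = fun t => -2 * B t + -2 * C t := funext fun t => (hP t).deriv
  have d2 := deriv_combination_of_eigen hB hC (-2) (-2)
  rw [← d1] at d2
  have d3 := deriv_combination_of_eigen hB hC (-2 * -2) (-2 * 2)
  rw [← d2] at d3
  refine ⟨fun t => (hP t).differentiableAt, ?_, ?_, fun t => ?_, fun t => ?_, fun t => ?_,
    fun t => ?_⟩
  · exact d1 ▸ differentiable_combination_of_eigen hB hC _ _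
  · exact d2 ▸ differentiable_combination_of_eigen hB hC _ _
  all_goals simp only [congrFun d1, congrFun d2, congrFun d3, P]; ring
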